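/- For every real α with α_NL > α > 1/2, one has γ*(α) > ξ_NL(α). -/
import Mathlib


/-- α_NL: the changing point between Segment 2 and Segment 3. -/
noncomputable def alphaNL (PhH PlH PhL PlL : ℝ) : ℝ :=
  (2 * PhH * PlL ^ 2 + PhH * (PhH + 3 * PlL) - (3 * PhH + PlL) + 2
      - 2 * PhL * Real.sqrt (PhH * PhL * PlH * PlL)) /
    (2 * PlH ^ 2 + 8 * PhH * PlL ^ 2)

/-- ξ_NL(α): the non-linear segment of the threshold curve. -/
noncomputable def xiNL (PhH PlH PhL PlL α : ℝ) : ℝ :=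
  (PhH - PhL) /
    (4 * Real.sqrt (2 * (1 - α * PlH) * (1 - 2 * α * PlL) * PlH * PlL)
      + 2 * PlH + 4 * PlL - 8 * α * PlH * PlL)

/-- b*(α): the maximizer of ξ̂ in the non-linear regime. -/
noncomputable def bStar (PlH PlL α : ℝ) : ℝ :=
  (1 - 2 * α) +
    Real.sqrt (2 * (1 - α * PlH) * (1 - 2 * α * PlL) * PlL * PlH) / (PlL * PlH)

/-- γ*(α): the fraction of type-0 minority agents achieving ξ_h = ξ_l at b = b*(α). -/
noncomputable def gammaStar (PhH PlH PhL PlL α : ℝ) : ℝ :=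
  ((1 / 2) * (PlL * bStar PlH PlL α + 2 - PlL)
      - α * (PhH * PlL + PlH * PlL * bStar PlH PlL α + PlH)) /
    ((PlL * bStar PlH PlL α + PhL) * (PlH * bStar PlH PlL α + PhH + 1))

set_option maxHeartbeats 1600000 in
/-- on the non-linear segment, γ*(α) > ξ_NL(α). -/
theorem stmt_17 (PhH PlH PhL PlL : ℝ)
    (hPhL : 0 < PhL) (hhh : PhL < PhH) (hHL : PhH ≤ PlL) (hPlL : PlL < 1)
    (hsH : PhH + PlH = 1) (hsL : PhL + PlL = 1) :
    ∀ α : ℝ, 1 / 2 < α → α < alphaNL PhH PlH PhL PlL →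
      xiNL PhH PlH PhL PlL α < gammaStar PhH PlH PhL PlL α := by
  have hq : PhH = 1 - PlH := by linarith
  have hL : PhL = 1 - PlL := by linarith
  subst hq hL
  intro α hα1 hα2
  have hp2 : (1:ℝ)/2 < PlL := by linarith
  have hp0 : (0:ℝ) < PlL := by linarith
  have hu0 : (0:ℝ) < PlH := by linarith
  have hup : PlH < PlL := by linarith
  have hu1 : PlH < 1 := by linarith
  -- Step A : α < 1/(2 PlL)
  have hαsmall : α < 1 / (2 * PlL) := by
    have h2p : (0:ℝ) < 2 * PlL := by linarith
    refine lt_trans hα2 ?_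
    unfold alphaNL
    have ht : 0 ≤ Real.sqrt ((1 - PlH) * (1 - PlL) * PlH * PlL) := Real.sqrt_nonneg _
    have hD : (0:ℝ) < 2 * PlH ^ 2 + 8 * (1 - PlH) * PlL ^ 2 := by nlinarith
    rw [div_lt_div_iff₀ hD h2p]
    have t1 : (0:ℝ) < (1 - PlL) * ((1 - PlL) * (PlL * PlL)) :=
      mul_pos (by linarith) (mul_pos (by linarith) (mul_pos hp0 hp0))
    have t2 : (0:ℝ) < ((1 - PlL) * (PlL - PlH)) * (2 * PlL ^ 2 - PlH) := by
      have h2p2 : (0:ℝ) < 2 * PlL ^ 2 - PlH := by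
        nlinarith [mul_pos hp0 (show (0:ℝ) < 2 * PlL - 1 by linarith)]
      exact mul_pos (mul_pos (by linarith) (by linarith)) h2p2
    have ht4 : (0:ℝ) ≤ 4 * PlL * (1 - PlL) * Real.sqrt ((1 - PlH) * (1 - PlL) * PlH * PlL) := by
      have h5 : (0:ℝ) ≤ 4 * PlL * (1 - PlL) := by nlinarith
      exact mul_nonneg h5 ht
    nlinarith [t1, t2, ht4]
  have hX : (0:ℝ) < 1 - 2 * α * PlL := by
    rw [lt_div_iff₀ (by linarith : (0:ℝ) < 2 * PlL)] at hαsmall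
    nlinarith
  have hα0 : (0:ℝ) < α := by linarith
  have hαlt1 : α < 1 := by
    rw [lt_div_iff₀ (by linarith : (0:ℝ) < 2 * PlL)] at hαsmall
    nlinarith
  have hY : (0:ℝ) < 1 - α * PlH := by nlinarith [mul_pos hα0 (show (0:ℝ) < 1 - PlH by linarith)]
  have h3 : (0:ℝ) < 2 * PlL + 3 * PlH - 8 * α * PlL * PlH := by
    nlinarith [mul_pos hu0 hX]
  have h4 : (0:ℝ) < 6 * PlL - 3 * PlH + 4 * PlH * (1 - 2 * α * PlL) := by
    nlinarith [mul_pos hu0 hX]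
  -- Step B : main inequality
  unfold xiNL gammaStar bStar
  rw [show 2 * (1 - α * PlH) * (1 - 2 * α * PlL) * PlL * PlH
      = 2 * (1 - α * PlH) * (1 - 2 * α * PlL) * PlH * PlL by ring]
  have hA : (0:ℝ) < 2 * (1 - α * PlH) * (1 - 2 * α * PlL) * PlH * PlL := by positivity
  have hs0 : (0:ℝ) < Real.sqrt (2 * (1 - α * PlH) * (1 - 2 * α * PlL) * PlH * PlL) :=
    Real.sqrt_pos.mpr hA
  have hsq : (Real.sqrt (2 * (1 - α * PlH) * (1 - 2 * α * PlL) * PlH * PlL)) ^ 2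
      = 2 * (1 - α * PlH) * (1 - 2 * α * PlL) * PlH * PlL := Real.sq_sqrt hA.le
  set s := Real.sqrt (2 * (1 - α * PlH) * (1 - 2 * α * PlL) * PlH * PlL) with hsdef
  clear_value s
  set c := 1 - 2 * α + s / (PlL * PlH) with hcdef
  have hcs : (c - (1 - 2 * α)) * (PlL * PlH) = s := by
    rw [hcdef]
    field_simp
    ring
  clear_value c
  have hs2c : ((c - (1 - 2 * α)) * (PlL * PlH)) ^ 2
      = 2 * (1 - α * PlH) * (1 - 2 * α * PlL) * PlH * PlL := by rw [hcs]; exact hsq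
  have hDξ : (0:ℝ) < 4 * s + 2 * PlH + 4 * PlL - 8 * α * PlH * PlL := by
    nlinarith [mul_pos hu0 hX, mul_pos hp0 hY]
  have hD1 : (0:ℝ) < PlL * c + (1 - PlL) := by
    have h6 : PlL * c + (1 - PlL) = (1 - 2 * α * PlL) + s / PlH := by
      rw [hcdef]; field_simp; ring
    rw [h6]
    have := div_pos hs0 hu0
    linarith
  have hD2 : (0:ℝ) < PlH * c + (1 - PlH) + 1 := by
    have h7 : PlH * c + (1 - PlH) + 1 = 2 * (1 - α * PlH) + s / PlL := by
      rw [hcdef]; field_simp; ring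
    rw [h7]
    have := div_pos hs0 hp0
    linarith
  clear hα2 hsdef hαsmall hsH hsL hA
  rw [div_lt_div_iff₀ hDξ (mul_pos hD1 hD2)]
  rw [← hcs]
  -- certificate
  have hSpos : (0:ℝ) < (c - (1 - 2 * α)) * (PlL * PlH) := by rw [hcs]; exact hs0
  have hP0 : (0:ℝ) < 2 * PlL ^ 2 * PlH ^ 2 * (1 - 2 * α * PlL) * (1 - α * PlH)
      * (2 * PlL + 3 * PlH - 8 * α * PlL * PlH) := by positivity
  have hP1 : (0:ℝ) < ((c - (1 - 2 * α)) * (PlL * PlH)) *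
      (PlL * PlH ^ 2 * (1 - 2 * α * PlL) * (6 * PlL - 3 * PlH + 4 * PlH * (1 - 2 * α * PlL))) := by
    have h8 : (0:ℝ) < PlL * PlH ^ 2 * (1 - 2 * α * PlL)
        * (6 * PlL - 3 * PlH + 4 * PlH * (1 - 2 * α * PlL)) := by positivity
    exact mul_pos hSpos h8
  have key : (PlL * PlH) ^ 2 *
      ((1 / 2 * (PlL * c + 2 - PlL) - α * ((1 - PlH) * PlL + PlH * PlL * c + PlH)) *
        (4 * ((c - (1 - 2 * α)) * (PlL * PlH)) + 2 * PlH + 4 * PlL - 8 * α * PlH * PlL)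
      - (1 - PlH - (1 - PlL)) *
        ((PlL * c + (1 - PlL)) * (PlH * c + (1 - PlH) + 1)))
      = 2 * PlL ^ 2 * PlH ^ 2 * (1 - 2 * α * PlL) * (1 - α * PlH)
          * (2 * PlL + 3 * PlH - 8 * α * PlL * PlH)
        + ((c - (1 - 2 * α)) * (PlL * PlH)) *
          (PlL * PlH ^ 2 * (1 - 2 * α * PlL)
            * (6 * PlL - 3 * PlH + 4 * PlH * (1 - 2 * α * PlL))) := by
    linear_combination (PlL * PlH ^ 2 + PlL ^ 2 * PlH - 4 * PlL ^ 2 * PlH ^ 2 * α) * hs2c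
  have hK : (0:ℝ) < (PlL * PlH) ^ 2 := by positivity
  nlinarith [key, hP0, hP1, hK]
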